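/- Let τ be a diagonal quasilinear p-form over F and let K/F be a field extension such that every p-th power of an element of K lies in the image of G_F(τ) under the embedding F → K. Let φ, ψ be diagonal quasilinear p-forms over F that are anisotropic over K and satisfy φ_K ≃ ψ_K. Then φ ⊗ τ ≃ ψ ⊗ τ over F. -/

import Mathlib

/-!
Diagonal quasilinear `p`-forms over a field `F` of characteristic `p`,
following Hoffmann and Zemková. A form of dimension `n` is recorded by its
coefficient tuple `a : ι → F` (for a finite index type `ι`), the form being
`x ↦ ∑ i, a i * (x i)^p`.
-/

universe u

namespace QLF

open scoped BigOperators

/-- Evaluation of the diagonal quasilinear `p`-form with coefficients `a` at `x`. -/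
def eval (p : ℕ) {F : Type*} [CommRing F] {ι : Type*} [Fintype ι]
    (a : ι → F) (x : ι → F) : F :=
  ∑ i, a i * x i ^ p

/-- A form is isotropic if it has a nontrivial zero. -/
def Isotropic (p : ℕ) {F : Type*} [CommRing F] {ι : Type*} [Fintype ι] (a : ι → F) : Prop :=
  ∃ x : ι → F, x ≠ 0 ∧ eval p a x = 0

/-- A form is anisotropic if it has no nontrivial zero. -/
def Anisotropic (p : ℕ) {F : Type*} [CommRing F] {ι : Type*} [Fintype ι] (a : ι → F) : Prop :=
  ¬ Isotropic p a

/-- In characteristic `p`, the zero set of a diagonal quasilinear `p`-form is a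
linear subspace. -/
def zeroSubmodule (p : ℕ) [Fact p.Prime] {F : Type*} [Field F] [CharP F p]
    {ι : Type*} [Fintype ι] (a : ι → F) : Submodule F (ι → F) where
  carrier := {x | eval p a x = 0}
  zero_mem' := by
    have hp : p ≠ 0 := (Fact.out : p.Prime).ne_zero
    simp [eval, zero_pow hp]
  add_mem' := by
    intro x y hx hy
    haveI : ExpChar F p := .prime Fact.out
    have hxy : eval p a (x + y) = eval p a x + eval p a y := by
      simp only [eval, Pi.add_apply]
      rw [← Finset.sum_add_distrib]
      exact Finset.sum_congr rfl fun i _ => by rw [add_pow_char, mul_add]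
    simp only [Set.mem_setOf_eq] at *
    rw [hxy, hx, hy, add_zero]
  smul_mem' := by
    intro c x hx
    simp only [Set.mem_setOf_eq] at *
    have hcx : eval p a (c • x) = c ^ p * eval p a x := by
      simp only [eval, Pi.smul_apply, smul_eq_mul, Finset.mul_sum]
      exact Finset.sum_congr rfl fun i _ => by rw [mul_pow]; ring
    rw [hcx, hx, mul_zero]

/-- The defect `i₀` of a form: the dimension of its zero set. -/
noncomputable def defect (p : ℕ) [Fact p.Prime] {F : Type*} [Field F] [CharP F p]
    {ι : Type*} [Fintype ι] (a : ι → F) : ℕ :=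
  Module.finrank F (zeroSubmodule p a)

/-- Isometry of forms: a linear bijection carrying one form into the other. -/
def Isometric (p : ℕ) {F : Type*} [Field F] {ι κ : Type*} [Fintype ι] [Fintype κ]
    (a : ι → F) (b : κ → F) : Prop :=
  ∃ T : (ι → F) ≃ₗ[F] (κ → F), ∀ x, eval p a x = eval p b (T x)

/-- `a` is a subform of `b`. -/
def Subform (p : ℕ) {F : Type*} [Field F] {ι κ : Type*} [Fintype ι] [Fintype κ]
    (a : ι → F) (b : κ → F) : Prop :=
  ∃ T : (ι → F) →ₗ[F] (κ → F), Function.Injective T ∧ ∀ x, eval p a x = eval p b (T x)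

/-- Similarity of forms: `a ≃ c·b` for some scalar `c ≠ 0`. -/
def Similar (p : ℕ) {F : Type*} [Field F] {ι κ : Type*} [Fintype ι] [Fintype κ]
    (a : ι → F) (b : κ → F) : Prop :=
  ∃ c : F, c ≠ 0 ∧ Isometric p a (fun i => c * b i)

/-- Vishik equivalence: same dimension, and equal defects over every field
extension `E/F`. -/
def VishikEquiv (p : ℕ) [Fact p.Prime] {F : Type u} [Field F] [CharP F p]
    {ι κ : Type*} [Fintype ι] [Fintype κ] (a : ι → F) (b : κ → F) : Prop :=
  Fintype.card ι = Fintype.card κ ∧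
    ∀ (E : Type u) [Field E] [CharP E p] (f : F →+* E),
      defect p (f ∘ a) = defect p (f ∘ b)

/-- Weak Vishik equivalence: same dimension, and equal defects over every field
extension of the shape `E = F(α)` with `αᵖ ∈ F` (this includes `E = F`). -/
def WeakVishikEquiv (p : ℕ) [Fact p.Prime] {F : Type u} [Field F] [CharP F p]
    {ι κ : Type*} [Fintype ι] [Fintype κ] (a : ι → F) (b : κ → F) : Prop :=
  Fintype.card ι = Fintype.card κ ∧
    ∀ (E : Type u) [Field E] [CharP E p] (f : F →+* E) (α : E),
      α ^ p ∈ Set.range ⇑f →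
      Subfield.closure (insert α (Set.range ⇑f)) = ⊤ →
      defect p (f ∘ a) = defect p (f ∘ b)

/-- The set `Fᵖ` of `p`-th powers. -/
def pSet (p : ℕ) (F : Type*) [Field F] : Set F := Set.range fun x : F => x ^ p

/-- The subfield `Fᵖ` of `p`-th powers (in characteristic `p` the set of `p`-th
powers is already a subfield, so the closure adds nothing). -/
def pthSubfield (p : ℕ) (F : Type*) [Field F] : Subfield F :=
  Subfield.closure (pSet p F)

/-- The subfield `Fᵖ(s)` generated by a set `s` over `Fᵖ`. -/
def adjoin (p : ℕ) {F : Type*} [Field F] (s : Set F) : Subfield F :=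
  Subfield.closure (pSet p F ∪ s)

/-- The degree `[N : k]` of a subfield `N` over a subfield `k` (for `k ≤ N`,
the `k`-span of `N` in `F` is `N` itself, so this is the `k`-dimension of `N`). -/
noncomputable def degOver {F : Type*} [Field F] (k : Subfield F) (N : Subfield F) : ℕ :=
  Module.finrank k (Submodule.span k (N : Set F))

/-- The set `D_F(φ)` of values of the form. -/
def values (p : ℕ) {F : Type*} [CommRing F] {ι : Type*} [Fintype ι] (a : ι → F) : Set F :=
  Set.range (eval p a)

/-- The norm field `N_F(φ)`: the subfield generated over `Fᵖ` by all quotients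
of nonzero values of `φ`. -/
def normField (p : ℕ) {F : Type*} [Field F] {ι : Type*} [Fintype ι] (a : ι → F) : Subfield F :=
  adjoin p {z : F | ∃ u ∈ values p a, ∃ v ∈ values p a, u ≠ 0 ∧ v ≠ 0 ∧ z = u / v}

/-- The norm degree `ndeg_F(φ) = [N_F(φ) : Fᵖ]`. -/
noncomputable def ndeg (p : ℕ) {F : Type*} [Field F] {ι : Type*} [Fintype ι] (a : ι → F) : ℕ :=
  degOver (pthSubfield p F) (normField p a)

/-- An anisotropic form is minimal if `ndeg_F(φ) = p^(dim φ - 1)`. -/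
def Minimal (p : ℕ) {F : Type*} [Field F] {ι : Type*} [Fintype ι] (a : ι → F) : Prop :=
  Anisotropic p a ∧ ndeg p a = p ^ (Fintype.card ι - 1)

/-- The quasi-Pfister form `⟪b₁,…,bₙ⟫`: its coefficients are all products
`b₁^{e₁}⋯bₙ^{eₙ}` with `0 ≤ eᵢ ≤ p-1`. -/
def pfister (p : ℕ) {F : Type*} [CommRing F] {n : ℕ} (b : Fin n → F) :
    (Fin n → Fin p) → F :=
  fun e => ∏ i, b i ^ (e i : ℕ)

/-- A form is a quasi-Pfister form if it is isometric to some `⟪b₁,…,bₙ⟫`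
with all `bᵢ ∈ F×`. -/
def IsQuasiPfister (p : ℕ) {F : Type*} [Field F] {ι : Type*} [Fintype ι] (a : ι → F) : Prop :=
  ∃ (n : ℕ) (b : Fin n → F), (∀ i, b i ≠ 0) ∧ Isometric p a (pfister p b)

/-- `a` is a quasi-Pfister neighbor of the form `π`: `c·a ⊆ π` for some `c ≠ 0`
and `p · dim a > dim π`. -/
def IsNeighborOf (p : ℕ) {F : Type*} [Field F] {ι κ : Type*} [Fintype ι] [Fintype κ]
    (a : ι → F) (π : κ → F) : Prop :=
  ∃ c : F, c ≠ 0 ∧ Subform p (fun i => c * a i) π ∧ p * Fintype.card ι > Fintype.card κ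

/-- `a` is a quasi-Pfister neighbor (of some quasi-Pfister form). -/
def IsQPNeighbor (p : ℕ) {F : Type*} [Field F] {ι : Type*} [Fintype ι] (a : ι → F) : Prop :=
  ∃ (n : ℕ) (b : Fin n → F), (∀ i, b i ≠ 0) ∧ IsNeighborOf p a (pfister p b)

/-- `a` is a quasi-Pfister neighbor of codimension one of some anisotropic
quasi-Pfister form: `dim π - dim a = 1`. -/
def IsQPNeighborCodimOne (p : ℕ) {F : Type*} [Field F] {ι : Type*} [Fintype ι]
    (a : ι → F) : Prop :=
  ∃ (n : ℕ) (b : Fin n → F), (∀ i, b i ≠ 0) ∧ Anisotropic p (pfister p b) ∧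
    IsNeighborOf p a (pfister p b) ∧ Fintype.card ι + 1 = p ^ n

/-- Tensor product of diagonal forms: coefficients `aᵢ · bⱼ`. -/
def tensor (p : ℕ) {F : Type*} [CommRing F] {ι κ : Type*}
    (a : ι → F) (b : κ → F) : ι × κ → F :=
  fun ik => a ik.1 * b ik.2

/-- The set `G_F(φ) = {x ∈ F× : xφ ≃ φ} ∪ {0}` of similarity factors. -/
def simFactors (p : ℕ) {F : Type*} [Field F] {ι : Type*} [Fintype ι] (a : ι → F) : Set F :=
  {x | x ≠ 0 ∧ Isometric p (fun i => x * a i) a} ∪ {0}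

/-- `b` is the anisotropic part of `a`: `b` is anisotropic and
`a ≃ b ⊥ (m × ⟨0⟩)` for some `m`. -/
def IsAnisotropicPart (p : ℕ) {F : Type*} [Field F] {ι κ : Type*} [Fintype ι] [Fintype κ]
    (a : ι → F) (b : κ → F) : Prop :=
  Anisotropic p b ∧ ∃ m : ℕ, Isometric p a (Sum.elim b fun _ : Fin m => (0 : F))

/-- `⟪c₁,…,cₘ⟫` is (a representative of) the norm form of `a`:
`N_F(a) = Fᵖ(c₁,…,cₘ)` and `ndeg_F(a) = pᵐ`. -/
def IsNormForm (p : ℕ) {F : Type*} [Field F] {ι : Type*} [Fintype ι] (a : ι → F)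
    {m : ℕ} (c : Fin m → F) : Prop :=
  normField p a = adjoin p (Set.range c) ∧ ndeg p a = p ^ m

end QLF

/-!
Over `K`, each coefficient `φᵢ` is the value of `ψ_K` at some vector `y`, and the `p`-th powers
`yⱼᵖ` come from similarity factors `gⱼ ∈ G_F(τ)`; hence `φᵢ = ∑ⱼ ψⱼ gⱼ` already over `F`. Since
`gⱼ τₖ` is a value of `τ`, every coefficient `φᵢ τₖ` of `φ ⊗ τ` is a value of `ψ ⊗ τ`, and the
value set of a quasilinear form is an `Fᵖ`-vector space spanned by its coefficients. By symmetry
`φ ⊗ τ` and `ψ ⊗ τ` have the same value set and the same dimension, so they are isometric.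
-/

open Module

section LinearAlgebra

variable {F U V W : Type*} [Field F] [AddCommGroup U] [Module F U] [AddCommGroup V] [Module F V]
  [AddCommGroup W] [Module F W]

theorem LinearMap.exists_linearEquiv_prod_ker (L : U →ₗ[F] W) :
    ∃ e : U ≃ₗ[F] LinearMap.range L × LinearMap.ker L, ∀ u, ((e u).1 : W) = L u := by
  obtain ⟨C, hC⟩ := (LinearMap.ker L).exists_isCompl
  refine ⟨LinearMap.equivProdOfSurjectiveOfIsCompl L.rangeRestrict
    ((LinearMap.ker L).projectionOnto C hC) L.range_rangeRestrict
    (Submodule.range_projectionOnto hC) ?_, fun u => rfl⟩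
  rwa [LinearMap.ker_rangeRestrict, Submodule.ker_projectionOnto]

theorem LinearMap.exists_linearEquiv_eq_comp_of_range_eq [FiniteDimensional F U]
    [FiniteDimensional F V] (La : U →ₗ[F] W) (Lb : V →ₗ[F] W)
    (hr : LinearMap.range La = LinearMap.range Lb) (hd : finrank F U = finrank F V) :
    ∃ T : U ≃ₗ[F] V, ∀ u, La u = Lb (T u) := by
  obtain ⟨eU, heU⟩ := La.exists_linearEquiv_prod_ker
  obtain ⟨eV, heV⟩ := Lb.exists_linearEquiv_prod_ker
  have hker : finrank F (LinearMap.ker La) = finrank F (LinearMap.ker Lb) := by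
    have hU := La.finrank_range_add_finrank_ker
    have hV := Lb.finrank_range_add_finrank_ker
    rw [hr] at hU
    omega
  refine ⟨eU.trans (((LinearEquiv.ofEq _ _ hr).prodCongr
    (LinearEquiv.ofFinrankEq _ _ hker)).trans eV.symm), fun u => ?_⟩
  rw [← heV, LinearEquiv.trans_apply, LinearEquiv.trans_apply, LinearEquiv.apply_symm_apply,
    ← heU]
  rfl

end LinearAlgebra

namespace QLF

/-- `F` as an `F`-module through the Frobenius, `c • x = cᵖ x`: the evaluation of a quasilinear
`p`-form is `F`-linear into it. -/
def FrobeniusTwist (p : ℕ) (F : Type*) : Type _ := F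

namespace FrobeniusTwist

variable (p : ℕ) (F : Type*) [Field F]

instance : AddCommGroup (FrobeniusTwist p F) := inferInstanceAs (AddCommGroup F)

noncomputable instance [ExpChar F p] : Module F (FrobeniusTwist p F) :=
  Module.compHom F (frobenius F p)

def of : F ≃+ FrobeniusTwist p F := AddEquiv.refl F

variable {p F}

theorem smul_of [ExpChar F p] (c x : F) : c • of p F x = of p F (c ^ p * x) := rfl

end FrobeniusTwist

open FrobeniusTwist

variable {p : ℕ} {F : Type*} [Field F] {ι κ μ : Type*} [Fintype ι] [Fintype κ] [Fintype μ]

theorem eval_add {R : Type*} [CommRing R] [ExpChar R p] (a x y : ι → R) :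
    eval p a (x + y) = eval p a x + eval p a y := by
  simp only [eval, Pi.add_apply, add_pow_expChar, mul_add, Finset.sum_add_distrib]

theorem eval_smul {R : Type*} [CommRing R] (a : ι → R) (c : R) (x : ι → R) :
    eval p a (c • x) = c ^ p * eval p a x := by
  simp only [eval, Pi.smul_apply, smul_eq_mul, mul_pow, Finset.mul_sum]
  exact Finset.sum_congr rfl fun _ _ => by ring

theorem eval_single {R : Type*} [CommRing R] [NeZero p] [DecidableEq ι] (a : ι → R) (i : ι) :
    eval p a (Pi.single i 1) = a i := by
  simp [eval, Pi.single_apply, apply_ite (· ^ p), zero_pow (NeZero.ne p)]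

variable (p) in
noncomputable def evalLinearMap [ExpChar F p] (a : ι → F) : (ι → F) →ₗ[F] FrobeniusTwist p F where
  toFun x := of p F (eval p a x)
  map_add' x y := by rw [eval_add, map_add]
  map_smul' c x := by rw [eval_smul, RingHom.id_apply, smul_of]

theorem mem_range_evalLinearMap [ExpChar F p] (a : ι → F) (y : F) :
    of p F y ∈ LinearMap.range (evalLinearMap p a) ↔ y ∈ values p a := Iff.rfl

theorem coeff_mem_values {R : Type*} [CommRing R] [NeZero p] (a : ι → R) (i : ι) :
    a i ∈ values p a := by
  classical
  exact ⟨Pi.single i 1, eval_single a i⟩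

theorem pow_mul_mem_values [ExpChar F p] {a : ι → F} {y : F} (hy : y ∈ values p a) (c : F) :
    c ^ p * y ∈ values p a :=
  (mem_range_evalLinearMap a _).1 <|
    (LinearMap.range (evalLinearMap p a)).smul_mem c ((mem_range_evalLinearMap a y).2 hy)

theorem sum_mem_values [ExpChar F p] {a : ι → F} {β : Type*} (s : Finset β) {y : β → F}
    (hy : ∀ j ∈ s, y j ∈ values p a) : ∑ j ∈ s, y j ∈ values p a := by
  rw [← mem_range_evalLinearMap, map_sum]
  exact Submodule.sum_mem _ fun j hj => (mem_range_evalLinearMap a _).2 (hy j hj)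

theorem values_subset_of_forall_coeff_mem [ExpChar F p] {a : ι → F} {b : κ → F}
    (h : ∀ i, a i ∈ values p b) : values p a ⊆ values p b := by
  rintro _ ⟨x, rfl⟩
  exact sum_mem_values _ fun i _ => mul_comm (x i ^ p) (a i) ▸ pow_mul_mem_values (h i) (x i)

theorem mul_mem_values_tensor {R : Type*} [CommRing R] {a : ι → R} {b : κ → R} {u v : R}
    (hu : u ∈ values p a) (hv : v ∈ values p b) : u * v ∈ values p (tensor p a b) := by
  obtain ⟨x, rfl⟩ := hu
  obtain ⟨y, rfl⟩ := hv
  refine ⟨fun ik => x ik.1 * y ik.2, ?_⟩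
  simp only [eval, tensor, Fintype.sum_prod_type, Finset.sum_mul_sum, mul_pow]
  exact Finset.sum_congr rfl fun _ _ => Finset.sum_congr rfl fun _ _ => by ring

theorem mul_mem_values_of_mem_simFactors [NeZero p] {τ : μ → F} {g y : F}
    (hg : g ∈ simFactors p τ) (hy : y ∈ values p τ) : g * y ∈ values p τ := by
  rcases hg with ⟨-, S, hS⟩ | rfl
  · obtain ⟨x, rfl⟩ := hy
    refine ⟨S x, ?_⟩
    rw [← hS, eval, eval, Finset.mul_sum]
    simp only [mul_assoc]
  · exact ⟨0, by simp [eval, NeZero.ne p]⟩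

theorem Isometric.symm {a : ι → F} {b : κ → F} (h : Isometric p a b) :
    Isometric p b a := by
  obtain ⟨T, hT⟩ := h
  exact ⟨T.symm, fun y => by rw [hT, LinearEquiv.apply_symm_apply]⟩

theorem Isometric.card_eq {a : ι → F} {b : κ → F} (h : Isometric p a b) :
    Fintype.card ι = Fintype.card κ := by
  obtain ⟨T, -⟩ := h
  simpa only [finrank_fintype_fun_eq_card] using T.finrank_eq

theorem isometric_of_values_eq [ExpChar F p] {a : ι → F} {b : κ → F}
    (hcard : Fintype.card ι = Fintype.card κ) (h : values p a = values p b) :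
    Isometric p a b := by
  have hr : LinearMap.range (evalLinearMap p a) = LinearMap.range (evalLinearMap p b) :=
    SetLike.ext fun y =>
      (mem_range_evalLinearMap a y).trans (h ▸ (mem_range_evalLinearMap b y).symm)
  obtain ⟨T, hT⟩ := LinearMap.exists_linearEquiv_eq_comp_of_range_eq _ _ hr
    (by simpa only [finrank_fintype_fun_eq_card] using hcard)
  exact ⟨T, fun x => (of p F).injective (hT x)⟩

theorem exists_eq_sum_mul_of_isometric_map [NeZero p] {K : Type*} [Field K] (f : F →+* K)
    {S : Set F} (hK : ∀ y : K, y ^ p ∈ f '' S) {a : ι → F} {b : κ → F}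
    (h : Isometric p (f ∘ a) (f ∘ b)) (i : ι) :
    ∃ g : κ → F, (∀ j, g j ∈ S) ∧ a i = ∑ j, b j * g j := by
  classical
  obtain ⟨T, hT⟩ := h
  choose g hgS hg using fun j => hK (T (Pi.single i 1) j)
  refine ⟨g, hgS, f.injective ?_⟩
  calc f (a i) = eval p (f ∘ a) (Pi.single i 1) := (eval_single (f ∘ a) i).symm
    _ = eval p (f ∘ b) (T (Pi.single i 1)) := hT _
    _ = f (∑ j, b j * g j) := by simp only [eval, map_sum, map_mul, hg, Function.comp_apply]

theorem values_tensor_subset_of_isometric_map [ExpChar F p] {K : Type*} [Field K]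
    (f : F →+* K) (τ : μ → F) (hK : ∀ y : K, y ^ p ∈ f '' simFactors p τ) {a : ι → F}
    {b : κ → F} (h : Isometric p (f ∘ a) (f ∘ b)) :
    values p (tensor p a τ) ⊆ values p (tensor p b τ) := by
  have : NeZero p := ⟨expChar_ne_zero F p⟩
  refine values_subset_of_forall_coeff_mem fun ⟨i, k⟩ => ?_
  obtain ⟨g, hg, hai⟩ := exists_eq_sum_mul_of_isometric_map f hK h i
  have hsum : tensor p a τ (i, k) = ∑ j, b j * (g j * τ k) := by
    simp only [tensor, hai, Finset.sum_mul, mul_assoc]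
  rw [hsum]
  exact sum_mem_values _ fun j _ => mul_mem_values_tensor (coeff_mem_values b j)
    (mul_mem_values_of_mem_simFactors (hg j) (coeff_mem_values τ k))

end QLF

theorem stmt_12_general (p : ℕ) [Fact p.Prime] {F : Type u} [Field F] [CharP F p]
    {t : ℕ} (τ : Fin t → F)
    (K : Type u) [Field K] (f : F →+* K)
    (hK : ∀ y : K, y ^ p ∈ f '' QLF.simFactors p τ)
    {n m : ℕ} (φ : Fin n → F) (ψ : Fin m → F)
    (h : QLF.Isometric p (f ∘ φ) (f ∘ ψ)) :
    QLF.Isometric p (QLF.tensor p φ τ) (QLF.tensor p ψ τ) := by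
  have hcard : Fintype.card (Fin n × Fin t) = Fintype.card (Fin m × Fin t) := by
    simp only [Fintype.card_prod, h.card_eq]
  exact QLF.isometric_of_values_eq hcard
    ((QLF.values_tensor_subset_of_isometric_map f τ hK h).antisymm
      (QLF.values_tensor_subset_of_isometric_map f τ hK h.symm))

/-- Let `τ` be a quasilinear `p`-form over `F` and `K/F` a field
extension with `Kᵖ ⊆ G_F(τ)`. If `φ`, `ψ` over `F` are anisotropic over `K` and
`φ_K ≃ ψ_K`, then `φ ⊗ τ ≃ ψ ⊗ τ` over `F`. -/
theorem stmt_12 (p : ℕ) [Fact p.Prime] {F : Type u} [Field F] [CharP F p]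
    {t : ℕ} (τ : Fin t → F)
    (K : Type u) [Field K] [CharP K p] (f : F →+* K)
    (hK : ∀ y : K, y ^ p ∈ f '' QLF.simFactors p τ)
    {n m : ℕ} (φ : Fin n → F) (ψ : Fin m → F)
    (hφ : QLF.Anisotropic p (f ∘ φ)) (hψ : QLF.Anisotropic p (f ∘ ψ))
    (h : QLF.Isometric p (f ∘ φ) (f ∘ ψ)) :
    QLF.Isometric p (QLF.tensor p φ τ) (QLF.tensor p ψ τ) :=
  stmt_12_general p τ K f hK φ ψ h
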